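/- arXiv:1201.4915 — 3 statements merged into one kernel-verified Lean document; each statement's English description precedes it below -/
import Mathlib

section
/- Let f : I ⊂ ℝ → ℝ be a differentiable mapping on an interval I, and let a, r ∈ I with a < r. If f' is integrable on [a, r], then for every α > 0 the following equality for Riemann–Liouville fractional integrals holds: (f(a) + f(r))/2 − (Γ(α+1)/(2(r−a)^α)) · [J_{a+}^α f(r) + J_{r−}^α f(a)] = ((r−a)/2) · ∫₀¹ ((1−t)^α − t^α) · f'(r + (a−r)t) dt. -/
open MeasureTheory Set

/-- Riemann–Liouville left fractional integral `J_{a+}^α f (x)`. -/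
noncomputable def RLleft (α a : ℝ) (f : ℝ → ℝ) (x : ℝ) : ℝ :=
  (1 / Real.Gamma α) * ∫ t in a..x, (x - t) ^ (α - 1) * f t

/-- Riemann–Liouville right fractional integral `J_{b-}^α f (x)`. -/
noncomputable def RLright (α b : ℝ) (f : ℝ → ℝ) (x : ℝ) : ℝ :=
  (1 / Real.Gamma α) * ∫ t in x..b, (t - x) ^ (α - 1) * f t

/-- `g` is `s`-convex in the second sense on `D`. -/
def SConvexOn (s : ℝ) (D : Set ℝ) (g : ℝ → ℝ) : Prop :=
  ∀ x ∈ D, ∀ y ∈ D, ∀ t ∈ Set.Icc (0:ℝ) 1,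
    g (t * x + (1 - t) * y) ≤ t ^ s * g x + (1 - t) ^ s * g y

/-- `g` is `s`-concave in the second sense on `D`. -/
def SConcaveOn (s : ℝ) (D : Set ℝ) (g : ℝ → ℝ) : Prop :=
  ∀ x ∈ D, ∀ y ∈ D, ∀ t ∈ Set.Icc (0:ℝ) 1,
    t ^ s * g x + (1 - t) ^ s * g y ≤ g (t * x + (1 - t) * y)

/-- Incomplete Beta function `β(x; p, q) = ∫₀ˣ t^(p-1) (1-t)^(q-1) dt`. -/
noncomputable def incBeta (x p q : ℝ) : ℝ :=
  ∫ t in (0:ℝ)..x, t ^ (p - 1) * (1 - t) ^ (q - 1)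

/-!
Integrating by parts against the weights `(b - x) ^ α` and `(x - a) ^ α` writes `Γ(α + 1)` times
each Riemann–Liouville integral of `f` as a boundary value of `f` plus an integral of `f'`; the
factor `α` produced by differentiating the weight is absorbed by `Γ(α + 1) = α Γ(α)`. The affine
substitution `x = r + (a - r) t` maps `[0, 1]` onto `[a, r]` and turns `1 - t` and `t` into
`(x - a) / (r - a)` and `(r - x) / (r - a)`, so the right-hand side is `(r - a) ^ (-α) / 2` times
the difference of those two integrals of `f'`, and the boundary values give `(f a + f r) / 2`.
-/

theorem Gamma_add_one_mul_RLleft {f f' : ℝ → ℝ} {a b α : ℝ} (hab : a ≤ b) (hα : 0 < α)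
    (hf : ContinuousOn f (Icc a b)) (hff' : ∀ x ∈ Ioo a b, HasDerivAt f (f' x) x)
    (hf' : IntervalIntegrable f' volume a b) :
    Real.Gamma (α + 1) * RLleft α a f b =
      (b - a) ^ α * f a + ∫ x in a..b, (b - x) ^ α * f' x := by
  have hu : ∀ x ∈ Ioo a b, HasDerivAt (fun x => (b - x) ^ α) (-α * (b - x) ^ (α - 1)) x :=
    fun x hx => by
      convert ((hasDerivAt_id' x).const_sub b).rpow_const (p := α)
        (Or.inl (sub_pos.2 hx.2).ne') using 1
      ring
  have hu' : IntervalIntegrable (fun x => -α * (b - x) ^ (α - 1)) volume a b := by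
    have := (intervalIntegral.intervalIntegrable_rpow' (a := b - a) (b := b - b)
      (by linarith : (-1 : ℝ) < α - 1)).comp_sub_left b
    simpa using this.const_mul (-α)
  have ibp := intervalIntegral.integral_mul_deriv_eq_deriv_mul_of_hasDerivAt
    (u := fun x => (b - x) ^ α)
    ((continuous_const.sub continuous_id).rpow_const fun _ => Or.inr hα.le).continuousOn
    (by rwa [uIcc_of_le hab]) (by rwa [min_eq_left hab, max_eq_right hab])
    (by rwa [min_eq_left hab, max_eq_right hab]) hu' hf'
  simp_rw [mul_assoc, intervalIntegral.integral_const_mul, sub_self,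
    Real.zero_rpow hα.ne', zero_mul, zero_sub] at ibp
  rw [RLleft, Real.Gamma_add_one hα.ne', ibp]
  field_simp [(Real.Gamma_pos_of_pos hα).ne']
  ring

theorem Gamma_add_one_mul_RLright {f f' : ℝ → ℝ} {a b α : ℝ} (hab : a ≤ b) (hα : 0 < α)
    (hf : ContinuousOn f (Icc a b)) (hff' : ∀ x ∈ Ioo a b, HasDerivAt f (f' x) x)
    (hf' : IntervalIntegrable f' volume a b) :
    Real.Gamma (α + 1) * RLright α b f a =
      (b - a) ^ α * f b - ∫ x in a..b, (x - a) ^ α * f' x := by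
  have hu : ∀ x ∈ Ioo a b, HasDerivAt (fun x => (x - a) ^ α) (α * (x - a) ^ (α - 1)) x :=
    fun x hx => by
      convert ((hasDerivAt_id' x).sub_const a).rpow_const (p := α)
        (Or.inl (sub_pos.2 hx.1).ne') using 1
      ring
  have hu' : IntervalIntegrable (fun x => α * (x - a) ^ (α - 1)) volume a b := by
    have := (intervalIntegral.intervalIntegrable_rpow' (a := a - a) (b := b - a)
      (by linarith : (-1 : ℝ) < α - 1)).comp_sub_right a
    simpa using this.const_mul α
  have ibp := intervalIntegral.integral_mul_deriv_eq_deriv_mul_of_hasDerivAt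
    (u := fun x => (x - a) ^ α)
    ((continuous_id.sub continuous_const).rpow_const fun _ => Or.inr hα.le).continuousOn
    (by rwa [uIcc_of_le hab]) (by rwa [min_eq_left hab, max_eq_right hab])
    (by rwa [min_eq_left hab, max_eq_right hab]) hu' hf'
  simp_rw [mul_assoc, intervalIntegral.integral_const_mul, sub_self,
    Real.zero_rpow hα.ne', zero_mul, sub_zero] at ibp
  rw [RLright, Real.Gamma_add_one hα.ne', ibp]
  field_simp [(Real.Gamma_pos_of_pos hα).ne']
  ring

theorem integral_unitInterval_comp_add_mul (g : ℝ → ℝ) {a b : ℝ} (hab : a ≠ b) :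
    ∫ t in (0 : ℝ)..1, g (b + (a - b) * t) = (b - a)⁻¹ * ∫ x in a..b, g x := by
  rw [intervalIntegral.integral_comp_add_mul g (sub_ne_zero.2 hab), smul_eq_mul,
    intervalIntegral.integral_symm, mul_zero, add_zero, mul_one, add_sub_cancel, ← neg_sub b a,
    inv_neg, neg_mul_neg]

theorem integral_unitInterval_rpow_sub_rpow_mul_comp (g : ℝ → ℝ) {a b : ℝ} (α : ℝ)
    (hab : a < b) :
    (b - a) * ∫ t in (0 : ℝ)..1, ((1 - t) ^ α - t ^ α) * g (b + (a - b) * t) =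
      ((b - a) ^ α)⁻¹ * ∫ x in a..b, ((x - a) ^ α - (b - x) ^ α) * g x := by
  have hba : 0 < b - a := sub_pos.2 hab
  set G : ℝ → ℝ := fun x => (((x - a) / (b - a)) ^ α - ((b - x) / (b - a)) ^ α) * g x with hG
  have hcomp : ∀ t, ((1 - t) ^ α - t ^ α) * g (b + (a - b) * t) = G (b + (a - b) * t) := by
    intro t
    simp only [hG]
    rw [show (b + (a - b) * t - a) / (b - a) = 1 - t by field_simp; ring,
      show (b - (b + (a - b) * t)) / (b - a) = t by field_simp; ring]
  calc (b - a) * ∫ t in (0 : ℝ)..1, ((1 - t) ^ α - t ^ α) * g (b + (a - b) * t)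
      = (b - a) * ∫ t in (0 : ℝ)..1, G (b + (a - b) * t) := by simp_rw [hcomp]
    _ = ∫ x in a..b, G x := by
        rw [integral_unitInterval_comp_add_mul G hab.ne, mul_inv_cancel_left₀ hba.ne']
    _ = ((b - a) ^ α)⁻¹ * ∫ x in a..b, ((x - a) ^ α - (b - x) ^ α) * g x := by
        rw [← intervalIntegral.integral_const_mul]
        refine intervalIntegral.integral_congr fun x hx => ?_
        rw [uIcc_of_le hab.le] at hx
        simp only [hG]
        rw [Real.div_rpow (sub_nonneg.2 hx.1) hba.le,
          Real.div_rpow (sub_nonneg.2 hx.2) hba.le]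
        ring

theorem lemma1_fractional_identity
    (I : Set ℝ) (hI : I.OrdConnected) (f f' : ℝ → ℝ) (a r α : ℝ)
    (haI : a ∈ I) (hrI : r ∈ I) (har : a < r)
    (hderiv : ∀ x ∈ I, HasDerivAt f (f' x) x)
    (hint : IntervalIntegrable f' volume a r)
    (hα : 0 < α) :
    (f a + f r) / 2 -
        Real.Gamma (α + 1) / (2 * (r - a) ^ α) * (RLleft α a f r + RLright α r f a) =
      (r - a) / 2 * ∫ t in (0:ℝ)..1, ((1 - t) ^ α - t ^ α) * f' (r + (a - r) * t) := by
  have hsub : Icc a r ⊆ I := hI.out haI hrI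
  have hf : ContinuousOn f (Icc a r) := fun x hx =>
    (hderiv x (hsub hx)).continuousAt.continuousWithinAt
  have hff' : ∀ x ∈ Ioo a r, HasDerivAt f (f' x) x := fun x hx =>
    hderiv x (hsub (Ioo_subset_Icc_self hx))
  have hleft := Gamma_add_one_mul_RLleft har.le hα hf hff' hint
  have hright := Gamma_add_one_mul_RLright har.le hα hf hff' hint
  have hsplit : ∫ x in a..r, ((x - a) ^ α - (r - x) ^ α) * f' x =
      (∫ x in a..r, (x - a) ^ α * f' x) - ∫ x in a..r, (r - x) ^ α * f' x := by
    simp_rw [sub_mul]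
    exact intervalIntegral.integral_sub
      (hint.continuousOn_mul ((continuous_id.sub continuous_const).rpow_const
        fun _ => Or.inr hα.le).continuousOn)
      (hint.continuousOn_mul ((continuous_const.sub continuous_id).rpow_const
        fun _ => Or.inr hα.le).continuousOn)
  have hrhs := integral_unitInterval_rpow_sub_rpow_mul_comp f' α har
  rw [hsplit] at hrhs
  have hpow : (r - a) ^ α ≠ 0 := (Real.rpow_pos_of_pos (sub_pos.2 har) α).ne'
  rw [div_mul_eq_mul_div, mul_add, hleft, hright, div_mul_eq_mul_div, hrhs]
  field_simp
  ring
end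

section
/- Suppose f : [0, ∞) → [0, ∞) is s-convex in the second sense for some fixed s ∈ (0, 1), and let a, b ∈ [0, ∞) with a < b. If f is integrable on [a, b], then: 2^{s−1} f((a+b)/2) ≤ (1/(b−a)) ∫_a^b f(x) dx ≤ (f(a) + f(b))/(s+1). -/
/-! Substituting `x_t = (1 - t) a + t b` turns the mean of `f` over `[a, b]` into
`∫₀¹ f(x_t) dt`. Integrating `f(x_t) ≤ (1 - t)^s f(a) + t^s f(b)` gives the right inequality,
since `∫₀¹ t^s dt = 1/(s + 1)`. For the left one, `(a + b)/2` is the midpoint of `x_t` and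
`x_{1-t}`, so `f((a + b)/2) ≤ 2^{-s} (f(x_t) + f(x_{1-t}))`, and both terms integrate to the
mean. -/

open MeasureTheory Set

open intervalIntegral

theorem IntervalIntegrable.comp_lineMap {f : ℝ → ℝ} {a b : ℝ} (hab : a ≠ b)
    (hf : IntervalIntegrable f volume a b) :
    IntervalIntegrable (fun t => f ((1 - t) * a + t * b)) volume 0 1 := by
  have h := (hf.comp_add_right a).comp_mul_left (c := b - a)
  rw [sub_self, zero_div, div_self (sub_ne_zero.2 hab.symm)] at h
  convert h using 3 with t
  ring

theorem integral_comp_lineMap (f : ℝ → ℝ) {a b : ℝ} (hab : a ≠ b) :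
    ∫ t in (0:ℝ)..1, f ((1 - t) * a + t * b) = (b - a)⁻¹ * ∫ x in a..b, f x := by
  have h := integral_comp_mul_add f (sub_ne_zero.2 hab.symm) a (a := 0) (b := 1)
  rw [mul_zero, zero_add, mul_one, sub_add_cancel, smul_eq_mul] at h
  rw [← h]
  congr 1 with t
  ring_nf

theorem integral_comp_one_sub_unit (g : ℝ → ℝ) :
    ∫ t in (0:ℝ)..1, g (1 - t) = ∫ t in (0:ℝ)..1, g t := by
  simp [integral_comp_sub_left]

theorem integral_rpow_unit {s : ℝ} (hs : -1 < s) : ∫ t in (0:ℝ)..1, t ^ s = 1 / (s + 1) := by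
  rw [integral_rpow (Or.inl hs), Real.one_rpow, Real.zero_rpow (by linarith), sub_zero]

theorem two_rpow_sub_one_mul_two_mul_half_rpow (s : ℝ) :
    2 ^ (s - 1) * (2 * (1 / 2) ^ s) = (1:ℝ) := by
  rw [Real.div_rpow zero_le_one zero_le_two, Real.one_rpow, Real.rpow_sub_one two_ne_zero]
  have : (2:ℝ) ^ s ≠ 0 := (Real.rpow_pos_of_pos two_pos s).ne'
  field_simp

namespace SConvexOn

variable {s : ℝ} {D : Set ℝ} {f : ℝ → ℝ} {a b : ℝ}

theorem le_half_rpow_mul_add (hf : SConvexOn s D f) (hD : Convex ℝ D) (ha : a ∈ D)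
    (hb : b ∈ D) {t : ℝ} (ht : t ∈ Icc (0:ℝ) 1) :
    f ((a + b) / 2) ≤
      (1 / 2) ^ s * (f ((1 - t) * a + t * b) + f ((1 - (1 - t)) * a + (1 - t) * b)) := by
  obtain ⟨ht0, ht1⟩ := ht
  have hx : (1 - t) * a + t * b ∈ D := hD ha hb (by linarith) ht0 (by ring)
  have hy : (1 - (1 - t)) * a + (1 - t) * b ∈ D := hD ha hb (by linarith) (by linarith) (by ring)
  have h := hf _ hx _ hy (1 / 2) ⟨by norm_num, by norm_num⟩
  rw [show (1:ℝ) - 1 / 2 = 1 / 2 by norm_num] at h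
  convert h using 2 <;> ring

theorem two_rpow_sub_one_mul_le_average (hf : SConvexOn s D f) (hD : Convex ℝ D) (ha : a ∈ D)
    (hb : b ∈ D) (hab : a ≠ b) (hint : IntervalIntegrable f volume a b) :
    2 ^ (s - 1) * f ((a + b) / 2) ≤ (b - a)⁻¹ * ∫ x in a..b, f x := by
  set g := fun t => f ((1 - t) * a + t * b)
  have hg : IntervalIntegrable g volume 0 1 := hint.comp_lineMap hab
  have hg' : IntervalIntegrable (fun t => g (1 - t)) volume 0 1 := by
    simpa using (hg.comp_sub_left 1).symm
  have hmono : ∫ _ in (0:ℝ)..1, f ((a + b) / 2)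
      ≤ ∫ t in (0:ℝ)..1, (1 / 2) ^ s * (g t + g (1 - t)) :=
    integral_mono_on zero_le_one intervalIntegrable_const ((hg.add hg').const_mul _)
      fun t ht => hf.le_half_rpow_mul_add hD ha hb ht
  rw [intervalIntegral.integral_const, intervalIntegral.integral_const_mul, integral_add hg hg',
    integral_comp_one_sub_unit, integral_comp_lineMap f hab, sub_zero, one_smul] at hmono
  set A := (b - a)⁻¹ * ∫ x in a..b, f x
  calc 2 ^ (s - 1) * f ((a + b) / 2) ≤ 2 ^ (s - 1) * ((1 / 2) ^ s * (A + A)) := by gcongr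
    _ = A := by linear_combination A * two_rpow_sub_one_mul_two_mul_half_rpow s

theorem average_le (hf : SConvexOn s D f) (hs : -1 < s) (ha : a ∈ D) (hb : b ∈ D)
    (hab : a ≠ b) (hint : IntervalIntegrable f volume a b) :
    (b - a)⁻¹ * ∫ x in a..b, f x ≤ (f a + f b) / (s + 1) := by
  have hp : IntervalIntegrable (fun t : ℝ => t ^ s) volume 0 1 := intervalIntegrable_rpow' hs
  have hq : IntervalIntegrable (fun t : ℝ => (1 - t) ^ s) volume 0 1 := by
    simpa using (hp.comp_sub_left 1).symm
  have hmono : ∫ t in (0:ℝ)..1, f ((1 - t) * a + t * b)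
      ≤ ∫ t in (0:ℝ)..1, ((1 - t) ^ s * f a + t ^ s * f b) := by
    refine integral_mono_on zero_le_one (hint.comp_lineMap hab)
      ((hq.mul_const _).add (hp.mul_const _)) fun t ht => ?_
    simpa only [add_comm] using hf b hb a ha t ht
  rw [integral_comp_lineMap f hab, integral_add (hq.mul_const _) (hp.mul_const _),
    intervalIntegral.integral_mul_const, intervalIntegral.integral_mul_const,
    integral_comp_one_sub_unit (· ^ s), integral_rpow_unit hs] at hmono
  exact hmono.trans_eq (by ring)

end SConvexOn

theorem hadamard_sconvex_general
    (f : ℝ → ℝ) (s a b : ℝ) (hs : s ∈ Set.Ioo (0:ℝ) 1)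
    (hconv : SConvexOn s (Set.Ici (0:ℝ)) f)
    (ha : 0 ≤ a) (hab : a < b)
    (hint : IntervalIntegrable f volume a b) :
    2 ^ (s - 1) * f ((a + b)/2) ≤ (1 / (b - a)) * ∫ x in a..b, f x ∧
      (1 / (b - a)) * ∫ x in a..b, f x ≤ (f a + f b) / (s + 1) := by
  have hb : b ∈ Ici (0:ℝ) := ha.trans hab.le
  rw [one_div]
  exact ⟨hconv.two_rpow_sub_one_mul_le_average (convex_Ici 0) ha hb hab.ne hint,
    hconv.average_le (by linarith [hs.1]) ha hb hab.ne hint⟩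

theorem hadamard_sconvex
    (f : ℝ → ℝ) (s a b : ℝ) (hs : s ∈ Set.Ioo (0:ℝ) 1)
    (hmap : ∀ x, 0 ≤ x → 0 ≤ f x)
    (hconv : SConvexOn s (Set.Ici (0:ℝ)) f)
    (ha : 0 ≤ a) (hab : a < b)
    (hint : IntervalIntegrable f volume a b) :
    2 ^ (s - 1) * f ((a + b)/2) ≤ (1 / (b - a)) * ∫ x in a..b, f x ∧
      (1 / (b - a)) * ∫ x in a..b, f x ≤ (f a + f b) / (s + 1) :=
  hadamard_sconvex_general f s a b hs hconv ha hab hint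
end

section
/- Let g be a real-valued function on [0, ∞) that is nonnegative and s-concave on an interval [a, r] ⊂ [0, ∞) with a < r, for some fixed s ∈ (0, 1], and suppose t ↦ g(r + (a−r)t) is integrable on [0, 1]. Then ∫₀¹ g(r + (a−r)t) dt ≤ 2^{s−1} · g((a+r)/2). -/
open MeasureTheory Set

theorem SConcaveOn.add_le_two_rpow_mul_midpoint {s : ℝ} {D : Set ℝ} {g : ℝ → ℝ}
    (hg : SConcaveOn s D g) {x y : ℝ} (hx : x ∈ D) (hy : y ∈ D) :
    g x + g y ≤ 2 ^ s * g ((x + y) / 2) := by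
  have hmid := hg x hx y hy (1 / 2) ⟨by norm_num, by norm_num⟩
  rw [show (1 : ℝ) - 1 / 2 = 1 / 2 by norm_num, ← mul_add,
    Real.div_rpow zero_le_one zero_le_two, Real.one_rpow,
    show 1 / 2 * x + 1 / 2 * y = (x + y) / 2 by ring] at hmid
  have h2s : (0 : ℝ) < 2 ^ s := Real.rpow_pos_of_pos two_pos s
  calc g x + g y = 2 ^ s * (1 / 2 ^ s * (g x + g y)) := by field_simp
    _ ≤ 2 ^ s * g ((x + y) / 2) := by gcongr

theorem intervalIntegral.integral_le_of_add_reflect_le {f : ℝ → ℝ} {a b C : ℝ} (hab : a ≤ b)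
    (hf : IntervalIntegrable f volume a b) (hC : ∀ t ∈ Icc a b, f t + f (a + b - t) ≤ C) :
    ∫ t in a..b, f t ≤ (b - a) * C / 2 := by
  have hreflect : ∫ t in a..b, f (a + b - t) = ∫ t in a..b, f t := by
    simp [intervalIntegral.integral_comp_sub_left]
  have hf' : IntervalIntegrable (fun t => f (a + b - t)) volume a b := by
    simpa using (hf.comp_sub_left (a + b)).symm
  have hsum : ∫ t in a..b, (f t + f (a + b - t)) ≤ ∫ _ in a..b, C :=
    intervalIntegral.integral_mono_on hab (hf.add hf') intervalIntegrable_const hC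
  rw [intervalIntegral.integral_add hf hf', hreflect, intervalIntegral.integral_const,
    smul_eq_mul] at hsum
  linarith

theorem sconcave_integral_bound_general
    (g : ℝ → ℝ) (a r s : ℝ) (har : a < r)
    (hconc : SConcaveOn s (Set.Icc a r) g)
    (hint : IntervalIntegrable (fun t => g (r + (a - r) * t)) volume 0 1) :
    ∫ t in (0:ℝ)..1, g (r + (a - r) * t) ≤ 2 ^ (s - 1) * g ((a + r)/2) := by
  have hmem : ∀ t ∈ Icc (0 : ℝ) 1, r + (a - r) * t ∈ Icc a r := fun t ⟨ht0, ht1⟩ =>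
    ⟨by nlinarith, by nlinarith⟩
  have hpair : ∀ t ∈ Icc (0 : ℝ) 1,
      g (r + (a - r) * t) + g (r + (a - r) * (0 + 1 - t)) ≤ 2 ^ s * g ((a + r) / 2) := by
    intro t ht
    have ht' : 0 + 1 - t ∈ Icc (0 : ℝ) 1 := ⟨by linarith [ht.2], by linarith [ht.1]⟩
    convert hconc.add_le_two_rpow_mul_midpoint (hmem t ht) (hmem _ ht') using 4
    ring
  calc ∫ t in (0:ℝ)..1, g (r + (a - r) * t) ≤ (1 - 0) * (2 ^ s * g ((a + r) / 2)) / 2 :=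
        intervalIntegral.integral_le_of_add_reflect_le zero_le_one hint hpair
    _ = 2 ^ (s - 1) * g ((a + r) / 2) := by
      rw [Real.rpow_sub_one two_ne_zero]
      ring

theorem sconcave_integral_bound
    (g : ℝ → ℝ) (a r s : ℝ) (ha : 0 ≤ a) (har : a < r)
    (hs : s ∈ Set.Ioc (0:ℝ) 1)
    (hnonneg : ∀ x ∈ Set.Icc a r, 0 ≤ g x)
    (hconc : SConcaveOn s (Set.Icc a r) g)
    (hint : IntervalIntegrable (fun t => g (r + (a - r) * t)) volume 0 1) :
    ∫ t in (0:ℝ)..1, g (r + (a - r) * t) ≤ 2 ^ (s - 1) * g ((a + r)/2) :=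
  sconcave_integral_bound_general g a r s har hconc hint
end
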